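/- arXiv:2512.06203 — 2 statements merged into one kernel-verified Lean document; each statement's English description precedes it below -/
import Mathlib

section
/- Consider a sequence of n discretized fee-free swaps starting from reserves (X₀, Y₀) with K₀ = X₀ * Y₀, where each step j takes (X_j, Y_j) to (X_{j+1}, Y_{j+1}) with X_{j+1} = X_j + δ_j > 0 and Y_{j+1} = ⌊X_j * Y_j / X_{j+1}⌋. Then K_n = X_n * Y_n satisfies K₀ - ∑_{j=1}^{n} X_j ≤ K_n ≤ K₀. -/
theorem multi_swap_bound (n : ℕ) (X Y : ℕ → ℕ) (δ : ℕ → ℕ)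
    (hX : ∀ j < n, X (j + 1) = X j + δ j)
    (hXpos : ∀ j < n, 0 < X (j + 1))
    (hY : ∀ j < n, Y (j + 1) = (X j * Y j) / X (j + 1)) :
    X 0 * Y 0 - (∑ j ∈ Finset.Icc 1 n, X j) ≤ X n * Y n ∧
    X n * Y n ≤ X 0 * Y 0 := by
  induction n with
  | zero => simp
  | succ n ih =>
    obtain ⟨h1, h2⟩ := ih (fun j hj => hX j (hj.trans n.lt_succ_self))
      (fun j hj => hXpos j (hj.trans n.lt_succ_self))
      (fun j hj => hY j (hj.trans n.lt_succ_self))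
    have hYn := hY n n.lt_succ_self
    have hpos := hXpos n n.lt_succ_self
    have hstep : X n * Y n < X (n+1) * Y (n+1) + X (n+1) := by
      rw [hYn]
      have h := Nat.div_add_mod (X n * Y n) (X (n+1))
      have hm := Nat.mod_lt (X n * Y n) hpos
      omega
    have hub : X (n+1) * Y (n+1) ≤ X n * Y n := by
      rw [hYn]
      have h := Nat.div_add_mod (X n * Y n) (X (n+1))
      omega
    have hsum : ∑ j ∈ Finset.Icc 1 (n+1), X j
        = (∑ j ∈ Finset.Icc 1 n, X j) + X (n+1) := by
      rw [Finset.sum_Icc_succ_top (by omega)]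
    omega
end

section
/- Define the state space of the bounded single-tick model as pairs (X, Y) ∈ ℕ² with X ≤ B and Y ≤ B, transitions given by discretized swaps with input δ chosen so that X + δ ≤ B. Then the invariant 'K₀ - n*B ≤ X*Y ≤ K₀' (where K₀ is the initial product) is inductive over any execution of length at most n: it holds initially and is preserved by each transition, with the slack budget decreasing by at most B per step. -/
theorem bounded_model_inductive_invariant (n B : ℕ) (X Y : ℕ → ℕ) (δ : ℕ → ℕ)
    (hbound : ∀ j ≤ n, X j ≤ B ∧ Y j ≤ B)
    (hX : ∀ j < n, X (j + 1) = X j + δ j)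
    (hXle : ∀ j < n, X j + δ j ≤ B)
    (hXpos : ∀ j < n, 0 < X (j + 1))
    (hY : ∀ j < n, Y (j + 1) = (X j * Y j) / X (j + 1)) :
    ∀ j ≤ n, X 0 * Y 0 - j * B ≤ X j * Y j ∧ X j * Y j ≤ X 0 * Y 0 := by
  intro j hj
  induction j with
  | zero => simp
  | succ k ih =>
    have hk : k < n := hj
    obtain ⟨ih1, ih2⟩ := ih (le_of_lt hk)
    have hpos := hXpos k hk
    have hYk := hY k hk
    have hXB : X (k + 1) ≤ B := by
      rw [hX k hk]; exact hXle k hk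
    -- upper bound
    have hup : X (k + 1) * Y (k + 1) ≤ X k * Y k := by
      rw [hYk]; exact Nat.mul_div_le _ _
    -- lower bound: X k * Y k < X(k+1) * Y(k+1) + X(k+1)
    have hlow : X k * Y k < X (k + 1) * Y (k + 1) + X (k + 1) := by
      rw [hYk]
      have := Nat.div_add_mod (X k * Y k) (X (k + 1))
      have := Nat.mod_lt (X k * Y k) hpos
      omega
    have hlow' : X k * Y k ≤ X (k + 1) * Y (k + 1) + B := by
      omega
    have hsm : (k + 1) * B = k * B + B := by ring
    constructor
    · omega
    · exact hup.trans ih2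
end
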